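/- Near-linearity of the top-count function: under the same hypotheses (anonymous, pairwise responsive, pairwise isolated, ε-strongly unanimous, m ≥ 3 candidates), for every candidate x, all j, j' ∈ {0,...,n−1}, and every ℓ ∈ [n] with j+ℓ ≤ n and j'+ℓ ≤ n, we have |(v'(x,j+ℓ) − v'(x,j)) − (v'(x,j'+ℓ) − v'(x,j'))| ≤ 64mε, where v'(x,j) is the selection probability of x on the canonical profile with exactly j voters ranking x first. -/

import Mathlib

open Finset

variable {C : Type*}

/-- A preference ordering on `C`: a ranking of the candidates, where a higher
rank means more preferred. -/
abbrev Pref (C : Type*) [Fintype C] := C ≃ Fin (Fintype.card C)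

/-- `x` is strictly preferred to `y` in `P`. -/
def PrefOver [Fintype C] (P : Pref C) (x y : C) : Prop := P y < P x

/-- The top (most preferred) candidate of `P`. -/
def topC [Fintype C] [Nonempty C] (P : Pref C) : C :=
  P.symm ⟨Fintype.card C - 1, Nat.sub_lt Fintype.card_pos Nat.one_pos⟩

/-- `x` is directly above `y` in `P`. -/
def DirAbove [Fintype C] (P : Pref C) (x y : C) : Prop := (P x : ℕ) = (P y : ℕ) + 1

/-- The ordering `P` with candidates `x` and `y` swapped. -/
def swapIn [Fintype C] [DecidableEq C] (P : Pref C) (x y : C) : Pref C :=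
  (Equiv.swap x y).trans P

/-- A (randomized) voting rule: nonnegative selection probabilities summing to 1. -/
def IsVotingRule [Fintype C] {n : ℕ} (v : (Fin n → Pref C) → C → ℝ) : Prop :=
  (∀ Pvec x, 0 ≤ v Pvec x) ∧ (∀ Pvec, ∑ x, v Pvec x = 1)

def Anonymous [Fintype C] {n : ℕ} (v : (Fin n → Pref C) → C → ℝ) : Prop :=
  ∀ (σ : Equiv.Perm (Fin n)) (Pvec : Fin n → Pref C) (x : C), v (Pvec ∘ σ) x = v Pvec x

/-- Expected utility of a distribution `d` over candidates under utility `u`. -/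
def EU [Fintype C] (u : C → ℝ) (d : C → ℝ) : ℝ := ∑ x, u x * d x

/-- A `[0,1]`-valued utility function consistent with the ordering `P`. -/
def Consistent [Fintype C] (u : C → ℝ) (P : Pref C) : Prop :=
  (∀ x, u x ∈ Set.Icc (0 : ℝ) 1) ∧ ∀ x y, u x > u y ↔ PrefOver P x y

/-- The random dictatorship voting rule. -/
noncomputable def vdict [Fintype C] [Nonempty C] [DecidableEq C] {n : ℕ}
    (Pvec : Fin n → Pref C) (x : C) : ℝ :=
  ((Finset.univ.filter (fun i => topC (Pvec i) = x)).card : ℝ) / n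

def StrategyProofRule [Fintype C] {n : ℕ} (v : (Fin n → Pref C) → C → ℝ) : Prop :=
  ∀ (i : Fin n) (Pvec : Fin n → Pref C) (P' : Pref C) (u : C → ℝ),
    Consistent u (Pvec i) → EU u (v (Function.update Pvec i P')) ≤ EU u (v Pvec)

def IsBelief [Fintype C] [DecidableEq C] (φ : Pref C → ℝ) : Prop :=
  (∀ P, 0 ≤ φ P) ∧ ∑ P, φ P = 1

/-- The profile where voter `i` submits `Pi` and the other voters submit `Q`. -/
def profileWith [Fintype C] {n : ℕ} (i : Fin n) (Q : {j : Fin n // j ≠ i} → Pref C)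
    (Pi : Pref C) : Fin n → Pref C :=
  fun j => if h : j = i then Pi else Q ⟨j, h⟩

/-- Expected utility for voter `i` reporting `Pi` when the others' orderings are
i.i.d. with distribution `φ`. -/
noncomputable def beliefEU [Fintype C] [DecidableEq C] {n : ℕ}
    (v : (Fin n → Pref C) → C → ℝ) (i : Fin n) (φ : Pref C → ℝ) (u : C → ℝ)
    (Pi : Pref C) : ℝ :=
  ∑ Q : {j : Fin n // j ≠ i} → Pref C, (∏ j, φ (Q j)) * EU u (v (profileWith i Q Pi))

/-- Strategy-proofness with respect to a single i.i.d. belief `φ`. -/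
def SPwrtBelief [Fintype C] [DecidableEq C] {n : ℕ}
    (v : (Fin n → Pref C) → C → ℝ) (φ : Pref C → ℝ) : Prop :=
  ∀ (i : Fin n) (Pi Pi' : Pref C) (u : C → ℝ),
    Consistent u Pi → beliefEU v i φ u Pi' ≤ beliefEU v i φ u Pi

/-- Weak strategy-proofness: strategy-proofness w.r.t. all i.i.d. beliefs. -/
def WeaklySP [Fintype C] [DecidableEq C] {n : ℕ}
    (v : (Fin n → Pref C) → C → ℝ) : Prop :=
  ∀ φ : Pref C → ℝ, IsBelief φ → SPwrtBelief v φ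

def ParetoEff [Fintype C] {n : ℕ} (ε : ℝ) (v : (Fin n → Pref C) → C → ℝ) : Prop :=
  ∀ (x y : C) (Pvec : Fin n → Pref C), (∀ i, PrefOver (Pvec i) x y) → v Pvec y ≤ ε

def StrongUnanimity [Fintype C] [Nonempty C] {n : ℕ} (ε : ℝ)
    (v : (Fin n → Pref C) → C → ℝ) : Prop :=
  ∀ (x : C) (Pvec : Fin n → Pref C), (∀ i, topC (Pvec i) = x) → 1 - ε ≤ v Pvec x

def WeakUnanimity [Fintype C] [Nonempty C] {n : ℕ} (ε : ℝ)
    (v : (Fin n → Pref C) → C → ℝ) : Prop :=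
  ∀ P : Pref C, 1 - ε ≤ v (fun _ => P) (topC P)

def SuperWeakUnanimity [Fintype C] [Nonempty C] {n : ℕ} (ε : ℝ)
    (v : (Fin n → Pref C) → C → ℝ) : Prop :=
  ∀ x : C, ∃ Pvec : Fin n → Pref C, (∀ i, topC (Pvec i) = x) ∧ 1 - ε ≤ v Pvec x

def PairwiseResponsive [Fintype C] [DecidableEq C] {n : ℕ}
    (v : (Fin n → Pref C) → C → ℝ) : Prop :=
  ∀ (Pvec : Fin n → Pref C) (i : Fin n) (x y z : C),
    DirAbove (Pvec i) x y → z ≠ x → z ≠ y →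
      v (Function.update Pvec i (swapIn (Pvec i) x y)) z = v Pvec z

def PairwiseIsolated [Fintype C] [DecidableEq C] {n : ℕ}
    (v : (Fin n → Pref C) → C → ℝ) : Prop :=
  ∀ (i : Fin n) (Pvec Pvec' : Fin n → Pref C) (x y : C),
    DirAbove (Pvec i) x y → Pvec' i = Pvec i →
    (∀ j, j ≠ i → (PrefOver (Pvec j) x y ↔ PrefOver (Pvec' j) x y)) →
    v (Function.update Pvec' i (swapIn (Pvec' i) x y)) y - v Pvec' y =
      v (Function.update Pvec i (swapIn (Pvec i) x y)) y - v Pvec y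

/-- The ordering `e` with candidate `x` moved to the top (relative order of the
other candidates preserved). -/
def moveToTop [Fintype C] [DecidableEq C] (e : Pref C) (x : C) : Pref C :=
  e.trans ((Fin.revPerm.trans (Fin.cycleRange (e x).rev)).trans Fin.revPerm)

/-- The ordering `e` with candidate `x` moved to the bottom (relative order of
the other candidates preserved). -/
def moveToBot [Fintype C] [DecidableEq C] (e : Pref C) (x : C) : Pref C :=
  e.trans (Fin.cycleRange (e x))

/-- The canonical profile `P⃗^{x,j}`: the first `j` voters rank `x` on top and
the remaining voters rank `x` on the bottom, with the other candidates ordered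
according to the fixed ordering `e`. -/
def canonProfile [Fintype C] [DecidableEq C] {n : ℕ} (e : Pref C) (x : C) (j : ℕ) :
    Fin n → Pref C :=
  fun i => if (i : ℕ) < j then moveToTop e x else moveToBot e x

/-- `v'(x,j)`: the selection probability of `x` on the canonical profile with
exactly `j` voters ranking `x` first. -/
def vTopCount [Fintype C] [DecidableEq C] {n : ℕ} (v : (Fin n → Pref C) → C → ℝ)
    (e : Pref C) (x : C) (j : ℕ) : ℝ :=
  v (canonProfile e x j) x

/-!
Fix two more candidates `y` and `z`. In the profile where the first `a` voters rank `x` first,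
the next `b` voters rank `y` first and the others rank `z` first, with `y` second whenever it
is not first, the three probabilities of `x`, `y`, `z` sum to nearly one: swapping `y` above `x`
and `z` makes `y` unanimous without affecting anyone else. Each of the three probabilities is
close to its top-count value `v'`: push the candidate to the bottom of every ordering not
topped by it, one adjacent swap at a time. Each swap costs at most `ε`, because by pairwise
isolation it costs the same as in a profile where all voters share one top candidate; after
that, every voter ranks the candidate first or last, and pairwise responsiveness together with
anonymity show that only the number of first places matters. Hence
`v'(x,a) + v'(y,b) + v'(z,n-a-b) ≈ 1`. Comparing `(a,b) = (j,ℓ)` with `(j+ℓ,0)` shows that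
`v'(x,j+ℓ) - v'(x,j) ≈ v'(y,ℓ) - v'(y,0)`, which does not depend on `j`.
-/

lemma exists_perm_iff_of_card_filter_eq {α : Type*} [Fintype α] {p q : α → Prop}
    [DecidablePred p] [DecidablePred q] (h : #{a | p a} = #{a | q a}) :
    ∃ σ : Equiv.Perm α, ∀ a, q (σ a) ↔ p a := by
  let e : {a // p a} ≃ {a // q a} :=
    Fintype.equivOfCardEq (by simpa only [Fintype.card_subtype] using h)
  exact ⟨e.extendSubtype, fun a =>
    ⟨fun hq => by_contra fun hp => e.extendSubtype_not_mem a hp hq, e.extendSubtype_mem a⟩⟩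

lemma Fin.card_filter_le_val_lt {n a c : ℕ} (h : c ≤ n) :
    #{i : Fin n | a ≤ (i : ℕ) ∧ (i : ℕ) < c} = c - a := by
  rw [← card_map Fin.valEmbedding, map_filter', ← Nat.card_Ico]
  congr 1
  ext k
  simp only [mem_filter, mem_map, mem_univ, true_and, Fin.valEmbedding_apply, mem_Ico]
  exact ⟨fun ⟨_, i, hi, hik⟩ => hik ▸ hi,
    fun hk => ⟨⟨⟨k, by omega⟩, rfl⟩, ⟨k, by omega⟩, hk, rfl⟩⟩

section Orderings

variable [Fintype C]

instance (P : Pref C) (x y : C) : Decidable (PrefOver P x y) :=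
  inferInstanceAs (Decidable (P y < P x))

lemma PrefOver.asymm {P : Pref C} {x y : C} (h : PrefOver P x y) : ¬ PrefOver P y x :=
  lt_asymm h

lemma PrefOver.trans {P : Pref C} {x y z : C} (hxy : PrefOver P x y) (hyz : PrefOver P y z) :
    PrefOver P x z :=
  lt_trans hyz hxy

lemma PrefOver.ne {P : Pref C} {x y : C} (h : PrefOver P x y) : x ≠ y := by
  rintro rfl
  exact lt_irrefl _ h

lemma prefOver_or_prefOver {P : Pref C} {x y : C} (h : x ≠ y) :
    PrefOver P x y ∨ PrefOver P y x :=
  (lt_or_gt_of_ne (P.injective.ne h)).symm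

lemma not_prefOver_iff {P : Pref C} {x y : C} (h : x ≠ y) :
    ¬ PrefOver P x y ↔ PrefOver P y x :=
  ⟨(prefOver_or_prefOver h).resolve_left, PrefOver.asymm⟩

lemma DirAbove.prefOver {P : Pref C} {x y : C} (h : DirAbove P x y) : PrefOver P x y :=
  Fin.lt_def.2 (h ▸ Nat.lt_succ_self _)

lemma DirAbove.ne {P : Pref C} {x y : C} (h : DirAbove P x y) : x ≠ y :=
  h.prefOver.ne

lemma Pref.eq_of_prefOver_imp {Q Q' : Pref C} (h : ∀ a b, PrefOver Q a b → PrefOver Q' a b) :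
    Q = Q' := by
  have hmono : StrictMono (Q.symm.trans Q') := fun i j hij =>
    h (Q.symm j) (Q.symm i) (by simpa [PrefOver] using hij)
  ext c
  simpa using congrArg Fin.val (hmono.apply_eq (x := Q c)).symm

lemma exists_dirAbove_prefOver_of_ne {Q Q' : Pref C} (hne : Q ≠ Q') :
    ∃ a b, DirAbove Q a b ∧ PrefOver Q' b a := by
  by_contra! hadj
  have hadj' : ∀ a b, DirAbove Q a b → PrefOver Q' a b := fun a b h =>
    (not_prefOver_iff h.ne.symm).1 (hadj a b h)
  have hgap : ∀ d a b, (Q a : ℕ) = Q b + d + 1 → PrefOver Q' a b := by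
    intro d
    induction d with
    | zero => exact hadj'
    | succ d ih =>
      intro a b h
      let c := Q.symm ⟨Q b + d + 1, by omega⟩
      have hc : (Q c : ℕ) = Q b + d + 1 := by simp [c]
      exact (hadj' a c (by simp only [DirAbove]; omega)).trans (ih c b hc)
  refine hne (Pref.eq_of_prefOver_imp fun a b h => hgap (Q a - Q b - 1) a b ?_)
  have : (Q b : ℕ) < Q a := h
  omega

variable [Nonempty C]

lemma topC_eq_iff {P : Pref C} {c : C} : topC P = c ↔ (P c : ℕ) = Fintype.card C - 1 := by
  rw [topC, Equiv.symm_apply_eq, Fin.ext_iff, eq_comm]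

lemma not_prefOver_topC (P : Pref C) (c : C) : ¬ PrefOver P c (topC P) := by
  have htop := topC_eq_iff.1 (rfl : topC P = topC P)
  have hc := (P c).isLt
  simp only [PrefOver, Fin.lt_def]
  omega

lemma topC_ne_of_prefOver {Q : Pref C} {c y : C} (h : PrefOver Q c y) : topC Q ≠ y := fun hy =>
  not_prefOver_topC Q c (by rwa [hy])

def TopOrBottom (Q : Pref C) (y : C) : Prop :=
  topC Q = y ∨ ∀ c, c ≠ y → PrefOver Q c y

lemma TopOrBottom.prefOver_iff {Q : Pref C} {y c : C} (h : TopOrBottom Q y) :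
    PrefOver Q c y ↔ c ≠ y ∧ topC Q ≠ y := by
  by_cases hy : topC Q = y
  · subst hy
    simp [not_prefOver_topC]
  · exact ⟨fun h' => ⟨h'.ne, hy⟩, fun h' => h.resolve_left hy c h'.1⟩

end Orderings

section Swap

variable [Fintype C] [DecidableEq C]

@[simp] lemma swapIn_apply_left (P : Pref C) (x y : C) : swapIn P x y x = P y := by
  simp [swapIn]

@[simp] lemma swapIn_apply_right (P : Pref C) (x y : C) : swapIn P x y y = P x := by
  simp [swapIn]

lemma swapIn_apply_of_ne (P : Pref C) {x y c : C} (hx : c ≠ x) (hy : c ≠ y) :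
    swapIn P x y c = P c := by
  simp [swapIn, Equiv.swap_apply_of_ne_of_ne hx hy]

lemma DirAbove.dirAbove_swapIn {Q : Pref C} {a b : C} (h : DirAbove Q a b) :
    DirAbove (swapIn Q a b) b a := by
  simpa [DirAbove] using h

lemma DirAbove.prefOver_swapIn_iff {Q : Pref C} {a b c d : C} (hab : DirAbove Q a b)
    (h₁ : ¬ (c = a ∧ d = b)) (h₂ : ¬ (c = b ∧ d = a)) :
    PrefOver (swapIn Q a b) c d ↔ PrefOver Q c d := by
  have hQ : (Q a : ℕ) = Q b + 1 := hab
  have hinj : ∀ u w, u ≠ w → (Q u : ℕ) ≠ Q w := fun u w h => Fin.val_injective.ne (Q.injective.ne h)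
  simp only [PrefOver, _root_.swapIn, Equiv.trans_apply, Fin.lt_def, Equiv.swap_apply_def]
  split_ifs <;> subst_vars <;> grind

lemma topC_swapIn [Nonempty C] {P : Pref C} {a b : C} (ha : topC P ≠ a) (hb : topC P ≠ b) :
    topC (swapIn P a b) = topC P := by
  rw [topC_eq_iff, swapIn_apply_of_ne P ha hb, ← topC_eq_iff]

lemma topC_swapIn_of_topC_eq [Nonempty C] {Q : Pref C} {a b : C}
    (ha : topC Q = a) : topC (swapIn Q a b) = b := by
  rw [topC_eq_iff, swapIn_apply_right, ← topC_eq_iff, ha]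

def discordantPairs (Q Q' : Pref C) : Finset (C × C) :=
  {p | PrefOver Q p.1 p.2 ∧ PrefOver Q' p.2 p.1}

lemma card_discordantPairs_swapIn_lt {Q Q' : Pref C} {a b : C} (hab : DirAbove Q a b)
    (hba : PrefOver Q' b a) : #(discordantPairs (swapIn Q a b) Q') < #(discordantPairs Q Q') := by
  have hab' : ¬ PrefOver (swapIn Q a b) a b := hab.dirAbove_swapIn.prefOver.asymm
  refine card_lt_card ⟨fun ⟨c, d⟩ hp => ?_, fun hsub => ?_⟩
  · simp only [discordantPairs, mem_filter, mem_univ, true_and] at hp ⊢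
    refine ⟨(hab.prefOver_swapIn_iff ?_ ?_).1 hp.1, hp.2⟩
    · rintro ⟨rfl, rfl⟩; exact hab' hp.1
    · rintro ⟨rfl, rfl⟩; exact hba.asymm hp.2
  · have := @hsub (a, b) (by simp [discordantPairs, hab.prefOver, hba])
    simp only [discordantPairs, mem_filter, mem_univ, true_and] at this
    exact hab' this.1

end Swap

section MoveTo

variable [Fintype C] [Nonempty C] [DecidableEq C]

lemma topC_moveToTop (e : Pref C) (x : C) : topC (moveToTop e x) = x := by
  rw [topC_eq_iff, moveToTop, Equiv.trans_apply, Equiv.trans_apply, Equiv.trans_apply]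
  simp

lemma prefOver_moveToBot (e : Pref C) {x c : C} (hc : c ≠ x) : PrefOver (moveToBot e x) c x := by
  have hx : moveToBot e x x = 0 := by simp [moveToBot]
  rw [PrefOver, hx, Fin.pos_iff_ne_zero, ← hx]
  exact (moveToBot e x).injective.ne hc

lemma dirAbove_moveToTop {e : Pref C} {x y : C} (hy : topC e = y) (hxy : x ≠ y) :
    DirAbove (moveToTop e x) x y := by
  have hey := topC_eq_iff.1 hy
  have hex : (e x : ℕ) < Fintype.card C - 1 := by
    have := (e x).isLt
    have := Fin.val_injective.ne (e.injective.ne hxy)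
    omega
  have hlt : (e y).rev < (e x).rev := by simp only [Fin.lt_def, Fin.val_rev]; omega
  have hx := topC_eq_iff.1 (topC_moveToTop e x)
  have hy' : ((e x).rev.cycleRange (e y).rev : ℕ) = 1 := by
    rw [Fin.coe_cycleRange_of_lt hlt, Fin.val_rev]; omega
  rw [DirAbove, hx]
  simp only [moveToTop, Equiv.trans_apply, Fin.revPerm_apply, Fin.val_rev, hy']
  omega

end MoveTo

section VotingRule

variable [Fintype C] {n : ℕ} {v : (Fin n → Pref C) → C → ℝ}

lemma IsVotingRule.le_one (hv : IsVotingRule v) (P : Fin n → Pref C) (c : C) : v P c ≤ 1 :=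
  (single_le_sum (fun x _ => hv.1 P x) (mem_univ c)).trans (hv.2 P).le

lemma IsVotingRule.sum_eq_of_forall_notMem_eq (hv : IsVotingRule v) {P P' : Fin n → Pref C}
    (T : Finset C) (h : ∀ c ∉ T, v P' c = v P c) : ∑ c ∈ T, v P' c = ∑ c ∈ T, v P c := by
  classical
  have hP := sum_add_sum_compl T (v P)
  have hP' := sum_add_sum_compl T (v P')
  rw [sum_congr rfl fun c hc => h c (mem_compl.1 hc), hv.2] at hP'
  linarith [hv.2 P]

variable [Nonempty C] {ε : ℝ}

lemma StrongUnanimity.apply_le (hv : IsVotingRule v) (hsu : StrongUnanimity ε v)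
    {P : Fin n → Pref C} {w c : C} (htop : ∀ i, topC (P i) = w) (hc : c ≠ w) : v P c ≤ ε := by
  classical
  have hpair : v P c + v P w ≤ 1 := by
    rw [← sum_pair hc, ← hv.2 P]
    exact sum_le_sum_of_subset_of_nonneg (subset_univ _) fun u _ _ => hv.1 P u
  linarith [hsu w P htop]

lemma StrongUnanimity.nonneg [DecidableEq C] (hv : IsVotingRule v) (hsu : StrongUnanimity ε v) :
    0 ≤ ε := by
  obtain ⟨x⟩ := ‹Nonempty C›
  let Q := moveToTop (Fintype.equivFin C) x
  linarith [hsu x (fun _ => Q) fun _ => topC_moveToTop _ x, hv.le_one (fun _ => Q) x]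

end VotingRule

section Responsive

variable [Fintype C] [DecidableEq C] {n : ℕ} {v : (Fin n → Pref C) → C → ℝ}

-- Bubble sort: swap adjacent discordant pairs, none of which involves `y`.
lemma PairwiseResponsive.apply_update_eq (hpr : PairwiseResponsive v) {y : C} {Q Q' : Pref C}
    (h : ∀ c, PrefOver Q c y ↔ PrefOver Q' c y) (P : Fin n → Pref C) (i : Fin n) :
    v (Function.update P i Q) y = v (Function.update P i Q') y := by
  induction hN : #(discordantPairs Q Q') using Nat.strong_induction_on generalizing Q with
  | _ N ih =>
  by_cases hQ : Q = Q'
  · rw [hQ]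
  obtain ⟨a, b, hab, hba⟩ := exists_dirAbove_prefOver_of_ne hQ
  have hay : a ≠ y := by
    rintro rfl
    exact hab.prefOver.asymm ((h b).2 hba)
  have hby : b ≠ y := by
    rintro rfl
    exact hba.asymm ((h a).1 hab.prefOver)
  have hswap : ∀ c, PrefOver (swapIn Q a b) c y ↔ PrefOver Q' c y := fun c =>
    (hab.prefOver_swapIn_iff (fun h => hby h.2.symm) (fun h => hay h.2.symm)).trans (h c)
  calc v (Function.update P i Q) y = v (Function.update P i (swapIn Q a b)) y := by
        simpa using (hpr (Function.update P i Q) i a b y (by simpa) hay.symm hby.symm).symm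
    _ = v (Function.update P i Q') y :=
        ih _ (hN ▸ card_discordantPairs_swapIn_lt hab hba) hswap rfl

lemma PairwiseResponsive.apply_eq_of_prefOver_iff (hpr : PairwiseResponsive v) {y : C}
    {P P' : Fin n → Pref C} (h : ∀ i c, PrefOver (P i) c y ↔ PrefOver (P' i) c y) :
    v P y = v P' y := by
  suffices ∀ S : Finset (Fin n), v P y = v (S.piecewise P' P) y by simpa using this univ
  intro S
  induction S using Finset.induction_on with
  | empty => simp
  | insert i S hiS ih =>
    have hPi : S.piecewise P' P = Function.update (S.piecewise P' P) i (P i) := by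
      simp [piecewise_eq_of_notMem _ _ _ hiS]
    rw [piecewise_insert, ih, hPi, Function.update_idem]
    exact hpr.apply_update_eq (h i) _ i

lemma PairwiseResponsive.apply_piecewise_swapIn (hpr : PairwiseResponsive v) {a b c : C}
    {Q : Pref C} (hab : DirAbove Q a b) (hca : c ≠ a) (hcb : c ≠ b) {S : Finset (Fin n)}
    {P : Fin n → Pref C} (hP : ∀ i ∈ S, P i = Q) :
    v (S.piecewise (fun _ => swapIn Q a b) P) c = v P c := by
  induction S using Finset.induction_on with
  | empty => simp
  | insert i S hiS ih =>
    have hPi : S.piecewise (fun _ => swapIn Q a b) P i = Q := by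
      rw [piecewise_eq_of_notMem _ _ _ hiS, hP i (mem_insert_self i S)]
    rw [piecewise_insert, ← ih fun j hj => hP j (mem_insert_of_mem hj)]
    have h := hpr _ i a b c (hPi ▸ hab) hca hcb
    rwa [hPi] at h

end Responsive

section Canonical

variable [Fintype C] [Nonempty C] [DecidableEq C]

lemma topC_moveToBot_ne (hm : 2 ≤ Fintype.card C) (e : Pref C) (x : C) :
    topC (moveToBot e x) ≠ x := by
  obtain ⟨c, hc⟩ := Fintype.exists_ne_of_one_lt_card hm x
  exact topC_ne_of_prefOver (prefOver_moveToBot e hc)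

lemma topOrBottom_canonProfile {n : ℕ} (e : Pref C) (y : C) (b : ℕ) (i : Fin n) :
    TopOrBottom (canonProfile e y b i) y := by
  unfold canonProfile
  split_ifs
  · exact Or.inl (topC_moveToTop e y)
  · exact Or.inr fun c hc => prefOver_moveToBot e hc

lemma topC_canonProfile_eq_iff {n : ℕ} (hm : 2 ≤ Fintype.card C) (e : Pref C) (y : C) (b : ℕ)
    (i : Fin n) : topC (canonProfile e y b i) = y ↔ (i : ℕ) < b := by
  unfold canonProfile
  split_ifs with h <;> simp [h, topC_moveToTop, topC_moveToBot_ne hm]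

lemma Anonymous.apply_eq_vTopCount {n : ℕ} {v : (Fin n → Pref C) → C → ℝ} (han : Anonymous v)
    (hpr : PairwiseResponsive v) (hm : 2 ≤ Fintype.card C) (e : Pref C) {y : C}
    {P : Fin n → Pref C} (hP : ∀ i, TopOrBottom (P i) y) :
    v P y = vTopCount v e y #{i | topC (P i) = y} := by
  set b := #{i | topC (P i) = y}
  have hcard : #{i | topC (canonProfile (n := n) e y b i) = y} = b := by
    simp_rw [topC_canonProfile_eq_iff hm, Fin.card_filter_val_lt]
    exact min_eq_right ((card_filter_le _ _).trans_eq (card_fin n))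
  obtain ⟨σ, hσ⟩ := exists_perm_iff_of_card_filter_eq hcard
  rw [vTopCount, ← han σ P y]
  refine hpr.apply_eq_of_prefOver_iff fun i c => ?_
  rw [Function.comp_apply, (hP (σ i)).prefOver_iff,
    (topOrBottom_canonProfile e y b i).prefOver_iff]
  simp only [ne_eq, hσ i]

end Canonical

section Isolated

variable [Fintype C] [DecidableEq C] {n : ℕ} {v : (Fin n → Pref C) → C → ℝ}

lemma PairwiseIsolated.apply_piecewise_swapIn_sub_eq (hpi : PairwiseIsolated v) {a b : C}
    {Q : Pref C} (hab : DirAbove Q a b) {S : Finset (Fin n)} {P P' : Fin n → Pref C}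
    (hP : ∀ i ∈ S, P i = Q) (hP' : ∀ i ∈ S, P' i = Q)
    (hPP' : ∀ i ∉ S, (PrefOver (P i) a b ↔ PrefOver (P' i) a b)) :
    v (S.piecewise (fun _ => swapIn Q a b) P) b - v P b =
      v (S.piecewise (fun _ => swapIn Q a b) P') b - v P' b := by
  induction S using Finset.induction_on with
  | empty => simp
  | insert i S hiS ih =>
    set R := S.piecewise (fun _ => swapIn Q a b) P
    set R' := S.piecewise (fun _ => swapIn Q a b) P'
    have hRi : R i = Q := by simp [R, hiS, hP i (mem_insert_self i S)]
    have hR'i : R' i = Q := by simp [R', hiS, hP' i (mem_insert_self i S)]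
    have hstep := hpi i R R' a b (hRi ▸ hab) (hR'i.trans hRi.symm) fun j hji => by
      by_cases hj : j ∈ S
      · simp [R, R', hj]
      · simpa [R, R', hj] using hPP' j (by simp [hj, hji])
    have hrest := ih (fun j hj => hP j (mem_insert_of_mem hj))
      (fun j hj => hP' j (mem_insert_of_mem hj)) fun j hj => by
        by_cases hji : j = i
        · rw [hji, hP i (mem_insert_self i S), hP' i (mem_insert_self i S)]
        · exact hPP' j (by simp [hj, hji])
    rw [hRi, hR'i] at hstep
    rw [piecewise_insert, piecewise_insert]
    linarith

variable [Nonempty C] {ε : ℝ}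

-- Compare with a profile in which every voter ranks `topC Q` first and which has the same
-- `a`-`b` comparisons outside `S`: there `b` has probability in `[0, ε]` before and after.
lemma abs_apply_piecewise_swapIn_sub_le (hv : IsVotingRule v) (hpi : PairwiseIsolated v)
    (hsu : StrongUnanimity ε v) {a b : C} {Q : Pref C} (hab : DirAbove Q a b)
    (ha : topC Q ≠ a) (hb : topC Q ≠ b) {S : Finset (Fin n)} {P : Fin n → Pref C}
    (hP : ∀ i ∈ S, P i = Q) :
    |v (S.piecewise (fun _ => swapIn Q a b) P) b - v P b| ≤ ε := by
  let P' : Fin n → Pref C := fun i => if i ∉ S ∧ ¬ PrefOver (P i) a b then swapIn Q a b else Q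
  have hswap : topC (swapIn Q a b) = topC Q := topC_swapIn ha hb
  have htop : ∀ i, topC (P' i) = topC Q := fun i => by
    dsimp only [P']
    split_ifs <;> simp [hswap]
  have htop' : ∀ i, topC (S.piecewise (fun _ => swapIn Q a b) P' i) = topC Q := fun i => by
    by_cases hi : i ∈ S <;> simp [hi, hswap, htop]
  have hcomp : ∀ i ∉ S, (PrefOver (P i) a b ↔ PrefOver (P' i) a b) := fun i hi => by
    by_cases h : PrefOver (P i) a b
    · simp [P', hi, h, hab.prefOver]
    · simp [P', hi, h, hab.dirAbove_swapIn.prefOver.asymm]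
  rw [hpi.apply_piecewise_swapIn_sub_eq hab hP (fun i hi => by simp [P', hi]) hcomp, abs_le]
  constructor <;> linarith [hv.1 P' b, hv.1 (S.piecewise (fun _ => swapIn Q a b) P') b,
    hsu.apply_le hv htop hb.symm, hsu.apply_le hv htop' hb.symm]

end Isolated

section Descent

variable [Fintype C] [Nonempty C] [DecidableEq C] {n : ℕ} {v : (Fin n → Pref C) → C → ℝ}
  {ε : ℝ}

-- `y` moves down one place at a time; the total probability being fixed, each step changes
-- the probability of `y` by minus that of the candidate it passes, which is at most `ε`.
lemma exists_bottom_abs_sub_le (hv : IsVotingRule v) (hpr : PairwiseResponsive v)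
    (hpi : PairwiseIsolated v) (hsu : StrongUnanimity ε v) {y : C} (Q : Pref C)
    {S : Finset (Fin n)} {P : Fin n → Pref C} (hP : ∀ i ∈ S, P i = Q) (htop : topC Q ≠ y) :
    ∃ P' : Fin n → Pref C, (∀ i ∉ S, P' i = P i) ∧
      (∀ i ∈ S, ∀ c, c ≠ y → PrefOver (P' i) c y) ∧ |v P' y - v P y| ≤ (Q y : ℕ) * ε := by
  induction hk : (Q y : ℕ) generalizing Q P with
  | zero =>
    refine ⟨P, fun _ _ => rfl, fun i hi c hc => ?_, by simp⟩
    rw [hP i hi, PrefOver, Fin.lt_def, hk, Nat.pos_iff_ne_zero, ← hk]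
    exact Fin.val_injective.ne (Q.injective.ne hc)
  | succ k ih =>
    let b := Q.symm ⟨k, by omega⟩
    have hyb : DirAbove Q y b := by simp [DirAbove, b, hk]
    have htopb : topC Q ≠ b := topC_ne_of_prefOver hyb.prefOver
    let P₁ := S.piecewise (fun _ => swapIn Q y b) P
    have hsum := hv.sum_eq_of_forall_notMem_eq {y, b} (P := P) (P' := P₁) fun c hc => by
      simp only [mem_insert, mem_singleton, not_or] at hc
      exact hpr.apply_piecewise_swapIn hyb hc.1 hc.2 hP
    rw [sum_pair hyb.ne, sum_pair hyb.ne] at hsum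
    have hb := abs_apply_piecewise_swapIn_sub_le hv hpi hsu hyb htop htopb hP
    obtain ⟨P', hout, hbot, hle⟩ := ih (swapIn Q y b) (P := P₁) (fun i hi => by simp [P₁, hi])
      (by rwa [topC_swapIn htop htopb]) (by simp [b])
    refine ⟨P', fun i hi => by simp [hout i hi, P₁, hi], hbot, ?_⟩
    calc |v P' y - v P y| ≤ |v P' y - v P₁ y| + |v P₁ y - v P y| := abs_sub_le _ _ _
      _ ≤ k * ε + ε := by
        gcongr
        rwa [show v P₁ y - v P y = -(v P₁ b - v P b) by linarith, abs_neg]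
      _ = (k + 1 : ℕ) * ε := by push_cast; ring

lemma exists_topOrBottom_or_mem_abs_sub_le (hv : IsVotingRule v) (hpr : PairwiseResponsive v)
    (hpi : PairwiseIsolated v) (hsu : StrongUnanimity ε v) {y : C} {Q : Pref C}
    {O : Finset (Pref C)} {P : Fin n → Pref C} (hP : ∀ i, TopOrBottom (P i) y ∨ P i ∈ insert Q O) :
    ∃ P' : Fin n → Pref C, (∀ i, TopOrBottom (P' i) y ∨ P' i ∈ O) ∧
      #{i | topC (P' i) = y} = #{i | topC (P i) = y} ∧
      |v P' y - v P y| ≤ Fintype.card C * ε := by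
  have hε := hsu.nonneg hv
  by_cases hQ : topC Q = y
  · refine ⟨P, fun i => ?_, rfl, by simpa using mul_nonneg (Nat.cast_nonneg _) hε⟩
    rcases hP i with h | h
    · exact Or.inl h
    · rcases mem_insert.1 h with h | h
      · exact Or.inl (Or.inl (h ▸ hQ))
      · exact Or.inr h
  obtain ⟨P', hout, hbot, hle⟩ := exists_bottom_abs_sub_le hv hpr hpi hsu Q (S := {i | P i = Q})
    (P := P) (by simp) hQ
  refine ⟨P', fun i => ?_, congrArg card (filter_congr fun i _ => ?_),
    hle.trans (mul_le_mul_of_nonneg_right (by exact_mod_cast (Q y).isLt.le) hε)⟩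
  · by_cases hi : P i = Q
    · exact Or.inl (Or.inr (hbot i (by simpa using hi)))
    · rw [hout i (by simpa using hi)]
      exact (hP i).imp_right fun h => (mem_insert.1 h).resolve_left hi
  · by_cases hi : P i = Q
    · rw [hi]
      exact iff_of_false (topC_ne_of_prefOver (hbot i (by simpa using hi) _ hQ)) hQ
    · rw [hout i (by simpa using hi)]

lemma abs_sub_vTopCount_le (hm : 2 ≤ Fintype.card C) (hv : IsVotingRule v) (han : Anonymous v)
    (hpr : PairwiseResponsive v) (hpi : PairwiseIsolated v) (hsu : StrongUnanimity ε v)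
    (e : Pref C) {y : C} (O : Finset (Pref C)) {P : Fin n → Pref C}
    (hP : ∀ i, TopOrBottom (P i) y ∨ P i ∈ O) :
    |v P y - vTopCount v e y #{i | topC (P i) = y}| ≤ #O * Fintype.card C * ε := by
  induction O using Finset.induction_on generalizing P with
  | empty =>
    simp [han.apply_eq_vTopCount hpr hm e fun i => (hP i).resolve_right (notMem_empty _)]
  | insert Q O hQO ih =>
    obtain ⟨P', hP', hcount, hle⟩ := exists_topOrBottom_or_mem_abs_sub_le hv hpr hpi hsu hP
    have hrest := ih hP'
    rw [hcount] at hrest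
    rw [card_insert_of_notMem hQO, Nat.cast_succ]
    calc |v P y - vTopCount v e y #{i | topC (P i) = y}|
        ≤ |v P y - v P' y| + |v P' y - vTopCount v e y #{i | topC (P i) = y}| := abs_sub_le _ _ _
      _ ≤ _ := by rw [abs_sub_comm]; linarith

end Descent

section ThreeCandidates

variable [Fintype C] [Nonempty C] [DecidableEq C] {n : ℕ} {v : (Fin n → Pref C) → C → ℝ}
  {ε : ℝ}

-- Swapping `y` above `x` resp. `z` makes `y` unanimously first without touching any other
-- candidate, so `x`, `y`, `z` keep their joint probability, which is then at least `1 - ε`.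
lemma abs_add_add_sub_one_le (hv : IsVotingRule v) (hpr : PairwiseResponsive v)
    (hsu : StrongUnanimity ε v) {x y z : C} {Ox Oy Oz : Pref C} (hOx : DirAbove Ox x y)
    (hx : topC Ox = x) (hy : topC Oy = y) (hOz : DirAbove Oz z y) (hz : topC Oz = z)
    (hxz : x ≠ z) {P : Fin n → Pref C} (hP : ∀ i, P i = Ox ∨ P i = Oy ∨ P i = Oz) :
    |v P x + v P y + v P z - 1| ≤ ε := by
  have hOxy : Ox ≠ Oy := fun h => hOx.ne (hx ▸ hy ▸ congrArg topC h)
  have hOxz : Ox ≠ Oz := fun h => hxz (hx ▸ hz ▸ congrArg topC h)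
  have hOyz : Oy ≠ Oz := fun h => hOz.ne.symm (hy ▸ hz ▸ congrArg topC h)
  let P₁ := ({i | P i = Ox} : Finset (Fin n)).piecewise (fun _ => swapIn Ox x y) P
  let P₂ := ({i | P i = Oz} : Finset (Fin n)).piecewise (fun _ => swapIn Oz z y) P₁
  have hP₁ : ∀ i ∈ ({i | P i = Oz} : Finset (Fin n)), P₁ i = Oz := fun i hi => by
    have hi : P i = Oz := by simpa using hi
    simp [P₁, hi, hOxz.symm]
  have htop : ∀ i, topC (P₂ i) = y := fun i => by
    rcases hP i with h | h | h
    · simp [P₂, P₁, h, hOxz, topC_swapIn_of_topC_eq hx]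
    · simp [P₂, P₁, h, hOxy.symm, hOyz, hy]
    · simp [P₂, P₁, h, topC_swapIn_of_topC_eq hz]
  have hsum := hv.sum_eq_of_forall_notMem_eq {x, y, z} (P := P) (P' := P₂) fun c hc => by
    simp only [mem_insert, mem_singleton, not_or] at hc
    rw [hpr.apply_piecewise_swapIn hOz hc.2.2 hc.2.1 hP₁,
      hpr.apply_piecewise_swapIn hOx hc.1 hc.2.1 fun i hi => by simpa using hi]
  have hle : ∑ c ∈ {x, y, z}, v P₂ c ≤ 1 :=
    (sum_le_univ_sum_of_nonneg (hv.1 P₂)).trans_eq (hv.2 P₂)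
  have hx_notMem : x ∉ ({y, z} : Finset C) := by simp [hOx.ne, hxz]
  simp only [sum_insert hx_notMem, sum_pair hOz.ne.symm] at hsum hle
  rw [abs_le]
  constructor <;> linarith [hsu y P₂ htop, hv.1 P₂ x, hv.1 P₂ z]

end ThreeCandidates

section ThreeBlocks

variable [Fintype C] [Nonempty C] [DecidableEq C] {n : ℕ} {v : (Fin n → Pref C) → C → ℝ}
  {ε : ℝ}

lemma abs_vTopCount_add_add_sub_one_le (hm : 3 ≤ Fintype.card C) (hv : IsVotingRule v)
    (han : Anonymous v) (hpr : PairwiseResponsive v) (hpi : PairwiseIsolated v)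
    (hsu : StrongUnanimity ε v) (e : Pref C) {x y z : C} (hxy : x ≠ y) (hxz : x ≠ z)
    (hyz : y ≠ z) {a b : ℕ} (hab : a + b ≤ n) :
    |vTopCount v e x a + vTopCount v e y b + vTopCount v e z (n - a - b) - 1| ≤
      10 * Fintype.card C * ε := by
  let Oy := moveToTop e y
  let Ox := moveToTop Oy x
  let Oz := moveToTop Oy z
  let P : Fin n → Pref C := fun i =>
    if (i : ℕ) < a then Ox else if (i : ℕ) < a + b then Oy else Oz
  have hP : ∀ i, P i = Ox ∨ P i = Oy ∨ P i = Oz := fun i => by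
    dsimp only [P]
    split_ifs <;> simp
  have htop : ∀ i, topC (P i) = if (i : ℕ) < a then x else if (i : ℕ) < a + b then y else z :=
    fun i => by
      dsimp only [P]
      split_ifs <;> exact topC_moveToTop _ _
  have hε := hsu.nonneg hv
  have hest : ∀ w lo hi, hi ≤ n → (∀ i : Fin n, topC (P i) = w ↔ lo ≤ (i : ℕ) ∧ (i : ℕ) < hi) →
      |v P w - vTopCount v e w (hi - lo)| ≤ 3 * Fintype.card C * ε := fun w lo hi hhi hw => by
    have h := abs_sub_vTopCount_le (by omega) hv han hpr hpi hsu e {Ox, Oy, Oz} (y := w) (P := P)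
      fun i => Or.inr (by rcases hP i with h | h | h <;> simp [h])
    rw [filter_congr fun i _ => hw i, Fin.card_filter_le_val_lt hhi] at h
    refine h.trans (mul_le_mul_of_nonneg_right ?_ hε)
    gcongr
    exact_mod_cast card_le_three
  have hx := hest x 0 a (by omega) fun i => by rw [htop]; split_ifs <;> grind
  have hy := hest y a (a + b) hab fun i => by rw [htop]; split_ifs <;> grind
  have hz := hest z (a + b) n le_rfl fun i => by rw [htop]; split_ifs <;> grind
  have hsum := abs_add_add_sub_one_le hv hpr hsu (dirAbove_moveToTop (topC_moveToTop e y) hxy)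
    (topC_moveToTop _ _) (topC_moveToTop _ _) (dirAbove_moveToTop (topC_moveToTop e y) hyz.symm)
    (topC_moveToTop _ _) hxz hP
  rw [Nat.sub_zero] at hx
  rw [Nat.add_sub_cancel_left] at hy
  rw [Nat.sub_sub]
  have hmε : ε ≤ Fintype.card C * ε := le_mul_of_one_le_left hε (by norm_cast; omega)
  rw [abs_le] at hx hy hz hsum ⊢
  constructor <;> linarith

end ThreeBlocks

theorem near_linearity_of_top_count_general [Fintype C] [Nonempty C] [DecidableEq C] {n : ℕ}
    (hm : 3 ≤ Fintype.card C) (v : (Fin n → Pref C) → C → ℝ)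
    (hv : IsVotingRule v) (han : Anonymous v) (hpr : PairwiseResponsive v)
    (hpi : PairwiseIsolated v) (ε : ℝ) (hsu : StrongUnanimity ε v)
    (e : Pref C) (x : C) (j j' ℓ : ℕ) (hjℓ : j + ℓ ≤ n) (hj'ℓ : j' + ℓ ≤ n) :
    |(vTopCount v e x (j + ℓ) - vTopCount v e x j) -
        (vTopCount v e x (j' + ℓ) - vTopCount v e x j')| ≤
      64 * (Fintype.card C : ℝ) * ε := by
  obtain ⟨y, hxy⟩ := Fintype.exists_ne_of_one_lt_card (by omega) x
  obtain ⟨z, -, hz⟩ := exists_mem_notMem_of_card_lt_card (s := {x, y}) (t := univ)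
    (by rw [card_univ]; exact card_le_two.trans_lt hm)
  simp only [mem_insert, mem_singleton, not_or] at hz
  have hsum := fun a b (hab : a + b ≤ n) => abs_vTopCount_add_add_sub_one_le hm hv han hpr hpi
    hsu e hxy.symm (Ne.symm hz.1) (Ne.symm hz.2) hab
  have h₁ := hsum j ℓ hjℓ
  have h₂ := hsum (j + ℓ) 0 (by omega)
  have h₃ := hsum j' ℓ hj'ℓ
  have h₄ := hsum (j' + ℓ) 0 (by omega)
  rw [Nat.sub_zero, ← Nat.sub_sub] at h₂ h₄
  have hmε := mul_nonneg (Nat.cast_nonneg (Fintype.card C)) (hsu.nonneg hv)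
  rw [abs_le] at h₁ h₂ h₃ h₄ ⊢
  constructor <;> linarith

/-- Near-linearity of the top-count function. -/
theorem near_linearity_of_top_count [Fintype C] [Nonempty C] [DecidableEq C] {n : ℕ}
    (hm : 3 ≤ Fintype.card C) (v : (Fin n → Pref C) → C → ℝ)
    (hv : IsVotingRule v) (han : Anonymous v) (hpr : PairwiseResponsive v)
    (hpi : PairwiseIsolated v) (ε : ℝ) (hsu : StrongUnanimity ε v)
    (e : Pref C) (x : C) (j j' ℓ : ℕ) (hj : j ≤ n - 1) (hj' : j' ≤ n - 1)
    (hℓ : 1 ≤ ℓ) (hjℓ : j + ℓ ≤ n) (hj'ℓ : j' + ℓ ≤ n) :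
    |(vTopCount v e x (j + ℓ) - vTopCount v e x j) -
        (vTopCount v e x (j' + ℓ) - vTopCount v e x j')| ≤
      64 * (Fintype.card C : ℝ) * ε :=
  near_linearity_of_top_count_general hm v hv han hpr hpi ε hsu e x j j' ℓ hjℓ hj'ℓ
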